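/- Let f, g : ℝ² → ℝ be C¹ and let U ⊆ (0,∞)×(0,∞) be a convex open set on which ∂f/∂y > 0, ∂g/∂x > 0 (strict mutualism), ∂f/∂x > 0 and ∂g/∂y > 0 (the sign configuration near a repulsive strictly mutualistic equilibrium). Then the system ẋ = x·f(x,y), ẏ = y·g(x,y) admits no nonconstant periodic solution whose image is contained in U; in particular, no limit cycle surrounding a repulsive strictly mutualistic equilibrium can lie in U (Theorem 4.1). -/

import Mathlib

open Set

/-- Partial derivative with respect to the first coordinate. -/
noncomputable def pdx (f : ℝ × ℝ → ℝ) (p : ℝ × ℝ) : ℝ := fderiv ℝ f p (1, 0)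

/-- Partial derivative with respect to the second coordinate. -/
noncomputable def pdy (f : ℝ × ℝ → ℝ) (p : ℝ × ℝ) : ℝ := fderiv ℝ f p (0, 1)

/-!
At a maximum of `x` the first equation forces `f = 0`, and at a minimum of `y` the second forces
`g = 0`; there `ÿ = y x f ∂g/∂x`, and `ÿ ≥ 0` gives `f ≥ 0`. Since `∂f/∂x, ∂f/∂y > 0`, `f` is
strictly increasing for the coordinatewise order on the convex set `U`, and the point of minimal
`y` lies below the point of maximal `x` in that order; comparing the values of `f` there shows that
the two points coincide. So the orbit meets an equilibrium and, by uniqueness of solutions of the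
`C¹` system, is constant.
-/

open Filter Topology

theorem Function.Periodic.exists_forall_ge {α : Type*} [TopologicalSpace α] [LinearOrder α]
    [ClosedIciTopology α] {u : ℝ → α} {T : ℝ} (hu : Function.Periodic u T) (hT : T ≠ 0)
    (hc : Continuous u) : ∃ t₀, ∀ t, u t ≤ u t₀ := by
  obtain ⟨_, ⟨t₀, rfl⟩, hmax⟩ :=
    (hu.compact_of_continuous hT hc).exists_isGreatest (range_nonempty u)
  exact ⟨t₀, fun t => hmax ⟨t, rfl⟩⟩

theorem Function.Periodic.exists_forall_le {α : Type*} [TopologicalSpace α] [LinearOrder α]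
    [ClosedIicTopology α] {u : ℝ → α} {T : ℝ} (hu : Function.Periodic u T) (hT : T ≠ 0)
    (hc : Continuous u) : ∃ t₀, ∀ t, u t₀ ≤ u t := by
  obtain ⟨_, ⟨t₀, rfl⟩, hmin⟩ :=
    (hu.compact_of_continuous hT hc).exists_isLeast (range_nonempty u)
  exact ⟨t₀, fun t => hmin ⟨t, rfl⟩⟩

theorem IsLocalMin.nonneg_of_hasDerivAt_of_hasDerivAt {u u' : ℝ → ℝ} {s c : ℝ}
    (hmin : IsLocalMin u s) (hu : ∀ t, HasDerivAt u (u' t) t) (hu' : HasDerivAt u' c s) :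
    0 ≤ c := by
  by_contra! hc
  have hderiv : deriv u = u' := funext fun t => (hu t).deriv
  have hmax : IsLocalMax u s := isLocalMax_of_deriv_deriv_neg
    (by rwa [hderiv, hu'.deriv]) (by rw [hderiv]; exact hmin.hasDerivAt_eq_zero (hu s))
    (hu s).continuousAt
  have hconst : u =ᶠ[𝓝 s] fun _ => u s :=
    (hmin.and hmax).mono fun t ht => le_antisymm ht.2 ht.1
  have hzero : u' =ᶠ[𝓝 s] fun _ => 0 :=
    hconst.eventuallyEq_nhds.mono fun t ht => by rw [← (hu t).deriv, ht.deriv_eq, deriv_const]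
  exact hc.ne' ((hasDerivAt_const s (0 : ℝ)).congr_of_eventuallyEq hzero |>.unique hu')

theorem ODE_solution_eq_of_eq_zero {E : Type*} [NormedAddCommGroup E] [NormedSpace ℝ E]
    {v : E → E} {e : E} (hv : ContDiffAt ℝ 1 v e) (he : v e = 0) {γ : ℝ → E}
    (hγ : ∀ t, HasDerivAt γ (v (γ t)) t) {t₀ : ℝ} (h₀ : γ t₀ = e) (t : ℝ) : γ t = e := by
  obtain ⟨K, s, hs, hlip⟩ := hv.exists_lipschitzOnWith
  have hcont : Continuous γ := continuous_iff_continuousAt.2 fun t => (hγ t).continuousAt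
  have hopen : IsOpen (γ ⁻¹' {e}) := by
    refine isOpen_iff_mem_nhds.2 fun t₁ (h₁ : γ t₁ = e) => ?_
    have hmem : ∀ᶠ t in 𝓝 t₁, γ t ∈ s := hcont.continuousAt.preimage_mem_nhds (h₁ ▸ hs)
    have hloc : γ =ᶠ[𝓝 t₁] fun _ => e :=
      ODE_solution_unique_of_eventually (v := fun _ => v) (s := fun _ => s)
        (Eventually.of_forall fun _ => hlip)
        (hmem.mono fun t ht => ⟨hγ t, ht⟩)
        (Eventually.of_forall fun _ => ⟨he ▸ hasDerivAt_const _ e, mem_of_mem_nhds hs⟩) h₁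
    exact hloc.mono fun _ ht => ht
  have hclopen : IsClopen (γ ⁻¹' {e}) := ⟨isClosed_singleton.preimage hcont, hopen⟩
  exact eq_univ_iff_forall.1 (hclopen.eq_univ ⟨t₀, h₀⟩) t

theorem fderiv_apply_eq_pdx_add_pdy (f : ℝ × ℝ → ℝ) (p v : ℝ × ℝ) :
    fderiv ℝ f p v = v.1 * pdx f p + v.2 * pdy f p := by
  have hv : v = v.1 • ((1 : ℝ), (0 : ℝ)) + v.2 • ((0 : ℝ), (1 : ℝ)) := by ext <;> simp
  rw [hv, map_add, map_smul, map_smul]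
  simp [pdx, pdy, smul_eq_mul]

theorem fderiv_apply_pos_of_pdx_pos_of_pdy_pos {f : ℝ × ℝ → ℝ} {p v : ℝ × ℝ}
    (hfx : 0 < pdx f p) (hfy : 0 < pdy f p) (hv : 0 < v) : 0 < fderiv ℝ f p v := by
  rw [fderiv_apply_eq_pdx_add_pdy]
  rcases Prod.lt_iff.1 hv with ⟨h₁, h₂⟩ | ⟨h₁, h₂⟩
  · exact add_pos_of_pos_of_nonneg (mul_pos h₁ hfx) (mul_nonneg h₂ hfy.le)
  · exact add_pos_of_nonneg_of_pos (mul_nonneg h₁ hfx.le) (mul_pos h₂ hfy)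

theorem strictMonoOn_of_pdx_pos_of_pdy_pos {f : ℝ × ℝ → ℝ} {U : Set (ℝ × ℝ)}
    (hU : Convex ℝ U) (hf : ∀ p ∈ U, DifferentiableAt ℝ f p)
    (hfx : ∀ p ∈ U, 0 < pdx f p) (hfy : ∀ p ∈ U, 0 < pdy f p) : StrictMonoOn f U := by
  intro p hp q hq hpq
  set c : ℝ → ℝ × ℝ := fun s => p + s • (q - p)
  have hcU : ∀ s ∈ Icc (0 : ℝ) 1, c s ∈ U := fun s hs => hU.add_smul_sub_mem hp hq hs
  have hderiv : ∀ s ∈ Icc (0 : ℝ) 1,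
      HasDerivAt (fun s => f (c s)) (fderiv ℝ f (c s) (q - p)) s := fun s hs =>
    (hf _ (hcU s hs)).hasFDerivAt.comp_hasDerivAt s
      (((hasDerivAt_id s).smul_const (q - p)).const_add p |>.congr_deriv (one_smul ℝ _))
  have hmono : StrictMonoOn (fun s => f (c s)) (Icc 0 1) := by
    refine strictMonoOn_of_deriv_pos (convex_Icc 0 1)
      (fun s hs => (hderiv s hs).continuousAt.continuousWithinAt) fun s hs => ?_
    have hs' : s ∈ Icc (0 : ℝ) 1 := interior_subset hs
    rw [(hderiv s hs').deriv]
    exact fderiv_apply_pos_of_pdx_pos_of_pdy_pos (hfx _ (hcU s hs')) (hfy _ (hcU s hs'))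
      (sub_pos.2 hpq)
  simpa [c] using hmono (left_mem_Icc.2 zero_le_one) (right_mem_Icc.2 zero_le_one) zero_lt_one

section Kolmogorov

variable {f g : ℝ × ℝ → ℝ} {x y : ℝ → ℝ}

theorem Kolmogorov.nonneg_of_isLocalMin {s : ℝ} (hg : DifferentiableAt ℝ g (x s, y s))
    (hx : HasDerivAt x (x s * f (x s, y s)) s)
    (hy : ∀ t, HasDerivAt y (y t * g (x t, y t)) t)
    (hxpos : 0 < x s) (hypos : 0 < y s) (hgx : 0 < pdx g (x s, y s)) (hmin : IsLocalMin y s)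
    (hgs : g (x s, y s) = 0) : 0 ≤ f (x s, y s) := by
  have hy' := (hy s).mul (hg.hasFDerivAt.comp_hasDerivAt s (hx.prodMk (hy s)))
  have hsecond : y s * g (x s, y s) * g (x s, y s) + y s * fderiv ℝ g (x s, y s)
      (x s * f (x s, y s), y s * g (x s, y s)) = (y s * x s * pdx g (x s, y s)) * f (x s, y s) := by
    rw [fderiv_apply_eq_pdx_add_pdy, hgs]
    ring
  have := hmin.nonneg_of_hasDerivAt_of_hasDerivAt hy hy'
  exact nonneg_of_mul_nonneg_right (hsecond ▸ this) (by positivity)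

theorem Kolmogorov.eq_of_equilibrium (hf : ContDiff ℝ 1 f) (hg : ContDiff ℝ 1 g)
    (hx : ∀ t, HasDerivAt x (x t * f (x t, y t)) t)
    (hy : ∀ t, HasDerivAt y (y t * g (x t, y t)) t) {s : ℝ}
    (hfs : f (x s, y s) = 0) (hgs : g (x s, y s) = 0) (t : ℝ) : (x t, y t) = (x s, y s) :=
  ODE_solution_eq_of_eq_zero (v := fun p => (p.1 * f p, p.2 * g p))
    ((contDiff_fst.mul hf).prodMk (contDiff_snd.mul hg)).contDiffAt (by simp [hfs, hgs])
    (fun t => (hx t).prodMk (hy t)) rfl t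

end Kolmogorov

theorem no_limit_cycle_strict_mutualism_repulsive_general
    (f g : ℝ × ℝ → ℝ) (hf : ContDiff ℝ 1 f) (hg : ContDiff ℝ 1 g)
    (U : Set (ℝ × ℝ)) (hUsub : U ⊆ Ioi (0:ℝ) ×ˢ Ioi (0:ℝ))
    (hUconv : Convex ℝ U)
    (hfy : ∀ p ∈ U, pdy f p > 0) (hgx : ∀ p ∈ U, pdx g p > 0)
    (hfx : ∀ p ∈ U, pdx f p > 0) :
    ¬ ∃ x y : ℝ → ℝ,
      (∀ t, HasDerivAt x (x t * f (x t, y t)) t) ∧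
      (∀ t, HasDerivAt y (y t * g (x t, y t)) t) ∧
      (∀ t, (x t, y t) ∈ U) ∧
      (∃ T > 0, ∀ t, x (t + T) = x t ∧ y (t + T) = y t) ∧
      (∃ t s, (x t, y t) ≠ (x s, y s)) := by
  rintro ⟨x, y, hx, hy, hU, ⟨T, hT, hper⟩, t₁, t₂, hne⟩
  have hpos : ∀ t, 0 < x t ∧ 0 < y t := fun t => hUsub (hU t)
  obtain ⟨t₀, hmax⟩ := Function.Periodic.exists_forall_ge (fun t => (hper t).1) hT.ne'
    (continuous_iff_continuousAt.2 fun t => (hx t).continuousAt)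
  obtain ⟨s, hmin⟩ := Function.Periodic.exists_forall_le (fun t => (hper t).2) hT.ne'
    (continuous_iff_continuousAt.2 fun t => (hy t).continuousAt)
  have hmax' : IsLocalMax x t₀ := IsMaxOn.isLocalMax (fun t _ => hmax t) univ_mem
  have hmin' : IsLocalMin y s := IsMinOn.isLocalMin (fun t _ => hmin t) univ_mem
  have hft₀ : f (x t₀, y t₀) = 0 :=
    (mul_eq_zero.1 (hmax'.hasDerivAt_eq_zero (hx t₀))).resolve_left (hpos t₀).1.ne'
  have hgs : g (x s, y s) = 0 :=
    (mul_eq_zero.1 (hmin'.hasDerivAt_eq_zero (hy s))).resolve_left (hpos s).2.ne'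
  have hfs : 0 ≤ f (x s, y s) :=
    Kolmogorov.nonneg_of_isLocalMin (hg.differentiable one_ne_zero _) (hx s) hy (hpos s).1
      (hpos s).2 (hgx _ (hU s)) hmin' hgs
  have hst₀ : (x s, y s) = (x t₀, y t₀) := by
    by_contra h
    have := strictMonoOn_of_pdx_pos_of_pdy_pos hUconv
      (fun p _ => hf.differentiable one_ne_zero p) hfx hfy (hU s) (hU t₀)
      (lt_of_le_of_ne ⟨hmax s, hmin t₀⟩ h)
    linarith
  have hconst := Kolmogorov.eq_of_equilibrium hf hg hx hy (hst₀ ▸ hft₀) hgs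
  exact hne ((hconst t₁).trans (hconst t₂).symm)

/-- Theorem 4.1: on a convex open region of the positive quadrant where
∂f/∂y > 0, ∂g/∂x > 0 (strict mutualism) and ∂f/∂x > 0, ∂g/∂y > 0 (the sign
configuration near a repulsive strictly mutualistic equilibrium), the system
ẋ = x f(x,y), ẏ = y g(x,y) has no nonconstant periodic solution contained in
the region; in particular no limit cycle lies in it. -/
theorem no_limit_cycle_strict_mutualism_repulsive
    (f g : ℝ × ℝ → ℝ) (hf : ContDiff ℝ 1 f) (hg : ContDiff ℝ 1 g)
    (U : Set (ℝ × ℝ)) (hUsub : U ⊆ Ioi (0:ℝ) ×ˢ Ioi (0:ℝ))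
    (hUconv : Convex ℝ U) (hUopen : IsOpen U)
    (hfy : ∀ p ∈ U, pdy f p > 0) (hgx : ∀ p ∈ U, pdx g p > 0)
    (hfx : ∀ p ∈ U, pdx f p > 0) (hgy : ∀ p ∈ U, pdy g p > 0) :
    ¬ ∃ x y : ℝ → ℝ,
      (∀ t, HasDerivAt x (x t * f (x t, y t)) t) ∧
      (∀ t, HasDerivAt y (y t * g (x t, y t)) t) ∧
      (∀ t, (x t, y t) ∈ U) ∧
      (∃ T > 0, ∀ t, x (t + T) = x t ∧ y (t + T) = y t) ∧
      (∃ t s, (x t, y t) ≠ (x s, y s)) :=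
  no_limit_cycle_strict_mutualism_repulsive_general f g hf hg U hUsub hUconv hfy hgx hfx
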